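/- Suppose Δ_G is a Garside element of G⁺ satisfying Δ_G ≤_L Δ' and Δ_G ≤_R Δ' for every Garside element Δ' of G⁺, and Δ_H is a Garside element of H⁺ satisfying Δ_H ≤_L Δ'' and Δ_H ≤_R Δ'' for every Garside element Δ'' of H⁺ (i.e. they are the minimal Garside elements). Then (Δ_G, Δ_H) is a Garside element of the monoid G⁺ ⋉ H⁺ and satisfies (Δ_G, Δ_H) ≤_L P and (Δ_G, Δ_H) ≤_R P for every Garside element P of G⁺ ⋉ H⁺ (i.e. it is the minimal Garside element of G⁺ ⋉ H⁺). -/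

import Mathlib

/-- `a` left-divides `b` in the monoid `M`. -/
def dvdL {M : Type*} [Monoid M] (a b : M) : Prop := ∃ c, a * c = b

/-- `a` right-divides `b` in the monoid `M`. -/
def dvdR {M : Type*} [Monoid M] (a b : M) : Prop := ∃ c, c * a = b

/-- `L(a)`, the set of left divisors of `a`. -/
def Lset {M : Type*} [Monoid M] (a : M) : Set M := {x | dvdL x a}

/-- `R(a)`, the set of right divisors of `a`. -/
def Rset {M : Type*} [Monoid M] (a : M) : Set M := {x | dvdR x a}

/-- `a` is an atom: `a ≠ 1` and `a = b * c` implies `b = 1` or `c = 1`. -/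
def IsAtomElt {M : Type*} [Monoid M] (a : M) : Prop :=
  a ≠ 1 ∧ ∀ b c : M, a = b * c → b = 1 ∨ c = 1

/-- `M` is atomic: every element is a finite product of atoms, and the lengths of
expressions of a given element as products of atoms are bounded above. -/
def Atomic (M : Type*) [Monoid M] : Prop :=
  (∀ a : M, ∃ l : List M, (∀ x ∈ l, IsAtomElt x) ∧ l.prod = a) ∧
  (∀ a : M, ∃ N : ℕ, ∀ l : List M, (∀ x ∈ l, IsAtomElt x) → l.prod = a → l.length ≤ N)

/-- `Δ` is a Garside element: `L(Δ) = R(Δ)` and `L(Δ)` generates `M`. -/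
def IsGarsideElt {M : Type*} [Monoid M] (Δ : M) : Prop :=
  Lset Δ = Rset Δ ∧ Submonoid.closure (Lset Δ) = ⊤

/-- `d` is a greatest common lower bound of `a` and `b` with respect to `≤_L`. -/
def IsGlbL {M : Type*} [Monoid M] (a b d : M) : Prop :=
  dvdL d a ∧ dvdL d b ∧ ∀ c : M, dvdL c a → dvdL c b → dvdL c d

/-- `d` is a least common upper bound of `a` and `b` with respect to `≤_L`. -/
def IsLubL {M : Type*} [Monoid M] (a b d : M) : Prop :=
  dvdL a d ∧ dvdL b d ∧ ∀ c : M, dvdL a c → dvdL b c → dvdL d c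

/-- `d` is a greatest common lower bound of `a` and `b` with respect to `≤_R`. -/
def IsGlbR {M : Type*} [Monoid M] (a b d : M) : Prop :=
  dvdR d a ∧ dvdR d b ∧ ∀ c : M, dvdR c a → dvdR c b → dvdR c d

/-- `d` is a least common upper bound of `a` and `b` with respect to `≤_R`. -/
def IsLubR {M : Type*} [Monoid M] (a b d : M) : Prop :=
  dvdR a d ∧ dvdR b d ∧ ∀ c : M, dvdR a c → dvdR b c → dvdR d c

/-- `M` is a Garside monoid: finitely generated, left and right cancellative, atomic,
`≤_L`- and `≤_R`-lattice conditions, and it possesses a Garside element. -/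
def IsGarsideMonoid (M : Type*) [Monoid M] : Prop :=
  (∃ S : Set M, S.Finite ∧ Submonoid.closure S = ⊤) ∧
  (∀ a b c : M, a * b = a * c → b = c) ∧
  (∀ a b c : M, b * a = c * a → b = c) ∧
  Atomic M ∧
  (∀ a b : M, ∃ d, IsGlbL a b d) ∧
  (∀ a b : M, ∃ d, IsLubL a b d) ∧
  (∀ a b : M, ∃ d, IsGlbR a b d) ∧
  (∀ a b : M, ∃ d, IsLubR a b d) ∧
  (∃ Δ : M, IsGarsideElt Δ)

/-- Group-level left divisibility: `a ≤_L b` iff `a⁻¹ * b` is positive. -/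
def gdvdL {G : Type*} [Group G] (P : Submonoid G) (a b : G) : Prop := a⁻¹ * b ∈ P

/-- Group-level right divisibility: `a ≤_R b` iff `b * a⁻¹` is positive. -/
def gdvdR {G : Type*} [Group G] (P : Submonoid G) (a b : G) : Prop := b * a⁻¹ ∈ P

/-- `G` is a Garside group with positive monoid `P` and chosen Garside element `Δ`:
`P` is a Garside monoid, every element of `G` is a fraction `a * b⁻¹` of positive
elements, and `Δ` is a Garside element of `P`. -/
def IsGarsideGroup {G : Type*} [Group G] (P : Submonoid G) (Δ : G) : Prop :=
  IsGarsideMonoid P ∧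
  (∀ g : G, ∃ a b : P, g = (a : G) * (b : G)⁻¹) ∧
  ∃ hΔ : Δ ∈ P, IsGarsideElt (⟨Δ, hΔ⟩ : P)

/-- A right action of the group `G` on the group `H` by group automorphisms,
written `h ↦ ρ.act x h` (the paper's `h^x`). -/
structure RightAction (G H : Type*) [Group G] [Group H] where
  act : G → H → H
  act_mul : ∀ (x : G) (h₁ h₂ : H), act x (h₁ * h₂) = act x h₁ * act x h₂
  act_one : ∀ h : H, act 1 h = h
  act_comp : ∀ (x y : G) (h : H), act (x * y) h = act y (act x h)

namespace RightAction

variable {G H : Type*} [Group G] [Group H]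

lemma act_one' (ρ : RightAction G H) (x : G) : ρ.act x 1 = 1 := by
  have h := ρ.act_mul x 1 1
  rw [one_mul] at h
  exact mul_left_cancel (a := ρ.act x 1) (by rw [mul_one]; exact h.symm)

end RightAction

/-- The semidirect product `G ⋉ H` with multiplication
`(x₁,h₁)·(x₂,h₂) = (x₁·x₂, h₁^{x₂}·h₂)`. -/
structure SDP {G H : Type*} [Group G] [Group H] (ρ : RightAction G H) where
  g : G
  h : H

namespace SDP

variable {G H : Type*} [Group G] [Group H] {ρ : RightAction G H}

protected def gmul (p q : SDP ρ) : SDP ρ := ⟨p.g * q.g, ρ.act q.g p.h * q.h⟩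

protected def gone : SDP ρ := ⟨1, 1⟩

protected def ginv (p : SDP ρ) : SDP ρ := ⟨p.g⁻¹, ρ.act p.g⁻¹ p.h⁻¹⟩

protected lemma gmul_assoc (p q r : SDP ρ) :
    SDP.gmul (SDP.gmul p q) r = SDP.gmul p (SDP.gmul q r) := by
  simp only [SDP.gmul, mk.injEq]
  exact ⟨mul_assoc _ _ _, by rw [ρ.act_mul, ρ.act_comp, mul_assoc]⟩

protected lemma gone_mul (p : SDP ρ) : SDP.gmul SDP.gone p = p := by
  simp only [SDP.gmul, SDP.gone]
  simp [RightAction.act_one']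

protected lemma gmul_one (p : SDP ρ) : SDP.gmul p SDP.gone = p := by
  simp only [SDP.gmul, SDP.gone]
  simp [ρ.act_one]

protected lemma ginv_mul_cancel (p : SDP ρ) : SDP.gmul (SDP.ginv p) p = SDP.gone := by
  simp only [SDP.gmul, SDP.ginv, SDP.gone, mk.injEq]
  rw [← ρ.act_comp]
  simp [ρ.act_one]

/-- The group structure on the semidirect product `G ⋉ H`. -/
instance : Group (SDP ρ) where
  mul := SDP.gmul
  one := SDP.gone
  inv := SDP.ginv
  mul_assoc := SDP.gmul_assoc
  one_mul := SDP.gone_mul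
  mul_one := SDP.gmul_one
  inv_mul_cancel := SDP.ginv_mul_cancel

@[simp] lemma mul_g (p q : SDP ρ) : (p * q).g = p.g * q.g := rfl
@[simp] lemma mul_h (p q : SDP ρ) : (p * q).h = ρ.act q.g p.h * q.h := rfl
@[simp] lemma one_g : (1 : SDP ρ).g = 1 := rfl
@[simp] lemma one_h : (1 : SDP ρ).h = 1 := rfl

end SDP

/-- Membership in the submonoid `G⁺ ⋉ H⁺` of `G ⋉ H`. -/
def SDPpos {G H : Type*} [Group G] [Group H] {ρ : RightAction G H}
    (PG : Submonoid G) (PH : Submonoid H) (p : SDP ρ) : Prop :=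
  p.g ∈ PG ∧ p.h ∈ PH

/-- `p ≤_L q` in `G ⋉ H`: `p · u = q` for some `u ∈ G⁺ ⋉ H⁺`. -/
def SDPdvdL {G H : Type*} [Group G] [Group H] {ρ : RightAction G H}
    (PG : Submonoid G) (PH : Submonoid H) (p q : SDP ρ) : Prop :=
  ∃ u : SDP ρ, SDPpos PG PH u ∧ p * u = q

/-- `p ≤_R q` in `G ⋉ H`: `u · p = q` for some `u ∈ G⁺ ⋉ H⁺`. -/
def SDPdvdR {G H : Type*} [Group G] [Group H] {ρ : RightAction G H}
    (PG : Submonoid G) (PH : Submonoid H) (p q : SDP ρ) : Prop :=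
  ∃ u : SDP ρ, SDPpos PG PH u ∧ u * p = q


/-!
Divisibility in `G⁺ ⋉ H⁺` is coordinatewise up to a twist: `(x,u) ≤_L (a,b)` iff `x ≤_L a` and
`u^(x⁻¹a) ≤_L b`, while `(x,u) ≤_R (a,b)` iff `x ≤_R a` and `u ≤_R b`. Each `Δ_H^y` is again a
Garside element, so minimality gives `Δ_H ≤_L Δ_H^y` for all `y`; hence `Δ_H` and `Δ_H^y` have the
same left divisors, the twist disappears and `(Δ_G, Δ_H)` is a Garside element.

Conversely, let `(a,b)` be a Garside element. Testing `L = R` on `(x,1)` and `(a,u)` gives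
`L(a) = R(a)` and `L(b) = R(b)`; testing it on `(a y⁻¹, u)` shows that `u ↦ u^y` preserves `L(b)`
for every right divisor `y` of `a`, hence for every `y ∈ G⁺`. Projecting generators of `G⁺ ⋉ H⁺`
then shows that `a` and `b` are Garside elements, and minimality of `Δ_G` and `Δ_H` gives
`(Δ_G, Δ_H) ≤ (a,b)` on both sides.
-/

open Submonoid

section Divisors

variable {M N : Type*} [Monoid M] [Monoid N]

lemma apply_mem_closure_of_mapsTo (f : M →* N) {s : Set M} {t : Set N} (hst : Set.MapsTo f s t)
    {x : M} (hx : x ∈ closure s) : f x ∈ closure t :=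
  closure_le (S := (closure t).comap f) |>.2 (fun _ hy => subset_closure (hst hy)) hx

lemma Lset_map_mulEquiv (e : M ≃* N) (a : M) : Lset (e a) = e '' Lset a := by
  ext x
  constructor
  · rintro ⟨c, hc⟩
    refine ⟨e.symm x, ⟨e.symm c, ?_⟩, e.apply_symm_apply x⟩
    rw [← map_mul, hc, e.symm_apply_apply]
  · rintro ⟨y, ⟨c, rfl⟩, rfl⟩
    exact ⟨e c, (map_mul e y c).symm⟩

lemma Rset_map_mulEquiv (e : M ≃* N) (a : M) : Rset (e a) = e '' Rset a := by
  ext x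
  constructor
  · rintro ⟨c, hc⟩
    refine ⟨e.symm x, ⟨e.symm c, ?_⟩, e.apply_symm_apply x⟩
    rw [← map_mul, hc, e.symm_apply_apply]
  · rintro ⟨y, ⟨c, rfl⟩, rfl⟩
    exact ⟨e c, (map_mul e c y).symm⟩

lemma IsGarsideElt.map_mulEquiv {Δ : M} (hΔ : IsGarsideElt Δ) (e : M ≃* N) :
    IsGarsideElt (e Δ) := by
  refine ⟨by rw [Lset_map_mulEquiv, Rset_map_mulEquiv, hΔ.1], ?_⟩
  rw [Lset_map_mulEquiv, ← MonoidHom.map_mclosure, hΔ.2, map_equiv_top]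

end Divisors

section GroupDivisors

variable {G : Type*} [Group G]

-- Divisors in a positive submonoid `P`, computed in the ambient group.
def gLset (P : Submonoid G) (Δ : G) : Set G := {x | x ∈ P ∧ gdvdL P x Δ}

def gRset (P : Submonoid G) (Δ : G) : Set G := {x | x ∈ P ∧ gdvdR P x Δ}

def IsGarsideIn (P : Submonoid G) (Δ : G) : Prop :=
  gLset P Δ = gRset P Δ ∧ P ≤ closure (gLset P Δ)

variable {P : Submonoid G} {Δ : G}

lemma dvdL_iff_gdvdL (x y : P) : dvdL x y ↔ gdvdL P x y := by
  refine ⟨fun ⟨c, hc⟩ => ?_, fun h => ⟨⟨_, h⟩, Subtype.ext (mul_inv_cancel_left _ _)⟩⟩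
  simp [gdvdL, ← hc]

lemma dvdR_iff_gdvdR (x y : P) : dvdR x y ↔ gdvdR P x y := by
  refine ⟨fun ⟨c, hc⟩ => ?_, fun h => ⟨⟨_, h⟩, Subtype.ext (inv_mul_cancel_right _ _)⟩⟩
  simp [gdvdR, ← hc]

lemma gLset_eq_image (hΔ : Δ ∈ P) : gLset P Δ = (↑) '' Lset (⟨Δ, hΔ⟩ : P) := by
  ext x
  constructor
  · rintro ⟨hx, h⟩
    exact ⟨⟨x, hx⟩, (dvdL_iff_gdvdL _ _).2 h, rfl⟩
  · rintro ⟨y, hy, rfl⟩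
    exact ⟨y.2, (dvdL_iff_gdvdL _ _).1 hy⟩

lemma gRset_eq_image (hΔ : Δ ∈ P) : gRset P Δ = (↑) '' Rset (⟨Δ, hΔ⟩ : P) := by
  ext x
  constructor
  · rintro ⟨hx, h⟩
    exact ⟨⟨x, hx⟩, (dvdR_iff_gdvdR _ _).2 h, rfl⟩
  · rintro ⟨y, hy, rfl⟩
    exact ⟨y.2, (dvdR_iff_gdvdR _ _).1 hy⟩

lemma isGarsideElt_mk_iff (hΔ : Δ ∈ P) : IsGarsideElt (⟨Δ, hΔ⟩ : P) ↔ IsGarsideIn P Δ := by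
  have hclosure : closure (gLset P Δ) = (closure (Lset (⟨Δ, hΔ⟩ : P))).map P.subtype := by
    rw [MonoidHom.map_mclosure, gLset_eq_image hΔ]
    rfl
  rw [IsGarsideElt, IsGarsideIn, gLset_eq_image hΔ, gRset_eq_image hΔ,
    Subtype.val_injective.image_injective.eq_iff, ← gLset_eq_image hΔ, hclosure]
  refine and_congr_right' ?_
  calc closure (Lset (⟨Δ, hΔ⟩ : P)) = ⊤
      ↔ (⊤ : Submonoid P).map P.subtype ≤ (closure (Lset (⟨Δ, hΔ⟩ : P))).map P.subtype := by
        rw [map_le_map_iff_of_injective Subtype.val_injective, top_le_iff]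
    _ ↔ _ := by rw [← MonoidHom.mrange_eq_map, P.mrange_subtype]

lemma one_mem_gLset (hΔ : Δ ∈ P) : 1 ∈ gLset P Δ :=
  ⟨one_mem P, by rwa [gdvdL, inv_one, one_mul]⟩

lemma one_mem_gRset (hΔ : Δ ∈ P) : 1 ∈ gRset P Δ :=
  ⟨one_mem P, by rwa [gdvdR, inv_one, mul_one]⟩

lemma self_mem_gLset (hΔ : Δ ∈ P) : Δ ∈ gLset P Δ :=
  ⟨hΔ, by rw [gdvdL, inv_mul_cancel]; exact one_mem P⟩

lemma self_mem_gRset (hΔ : Δ ∈ P) : Δ ∈ gRset P Δ :=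
  ⟨hΔ, by rw [gdvdR, mul_inv_cancel]; exact one_mem P⟩

lemma gLset_subset_of_gdvdL {Δ' : G} (h : gdvdL P Δ Δ') : gLset P Δ ⊆ gLset P Δ' := by
  rintro x ⟨hx, hxΔ⟩
  refine ⟨hx, ?_⟩
  have := mul_mem hxΔ h
  rwa [mul_assoc, mul_inv_cancel_left] at this

end GroupDivisors

namespace RightAction

variable {G H : Type*} [Group G] [Group H] {ρ : RightAction G H}

variable (ρ) in
def toMulEquiv (x : G) : H ≃* H where
  toFun := ρ.act x
  invFun := ρ.act x⁻¹
  left_inv u := by rw [← ρ.act_comp, mul_inv_cancel, ρ.act_one]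
  right_inv u := by rw [← ρ.act_comp, inv_mul_cancel, ρ.act_one]
  map_mul' := ρ.act_mul x

lemma act_inv (x : G) (u : H) : ρ.act x u⁻¹ = (ρ.act x u)⁻¹ :=
  map_inv (ρ.toMulEquiv x) u

lemma act_inv_act (x : G) (u : H) : ρ.act x⁻¹ (ρ.act x u) = u :=
  (ρ.toMulEquiv x).symm_apply_apply u

lemma act_act_inv (x : G) (u : H) : ρ.act x (ρ.act x⁻¹ u) = u :=
  (ρ.toMulEquiv x).apply_symm_apply u

variable {PH : Submonoid H}

lemma act_mem_iff (hact : ∀ x : G, ρ.act x '' (PH : Set H) = PH) (x : G) (u : H) :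
    ρ.act x u ∈ PH ↔ u ∈ PH := by
  rw [← SetLike.mem_coe, ← hact x]
  exact (ρ.toMulEquiv x).injective.mem_set_image

lemma gdvdL_act_act_iff (hact : ∀ x : G, ρ.act x '' (PH : Set H) = PH) (x : G) (u v : H) :
    gdvdL PH (ρ.act x u) (ρ.act x v) ↔ gdvdL PH u v := by
  rw [gdvdL, gdvdL, ← act_inv, ← ρ.act_mul, act_mem_iff hact]

lemma act_mem_gLset_act_iff (hact : ∀ x : G, ρ.act x '' (PH : Set H) = PH) (x : G) (u v : H) :
    ρ.act x u ∈ gLset PH (ρ.act x v) ↔ u ∈ gLset PH v :=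
  and_congr (act_mem_iff hact x u) (gdvdL_act_act_iff hact x u v)

def submonoidMulEquiv (hact : ∀ x : G, ρ.act x '' (PH : Set H) = PH) (x : G) : PH ≃* PH where
  toFun u := ⟨ρ.act x u, (act_mem_iff hact x u).2 u.2⟩
  invFun u := ⟨ρ.act x⁻¹ u, (act_mem_iff hact x⁻¹ u).2 u.2⟩
  left_inv u := Subtype.ext (act_inv_act x (u : H))
  right_inv u := Subtype.ext (act_act_inv x (u : H))
  map_mul' u v := Subtype.ext (ρ.act_mul x u v)

lemma act_mem_gLset_iff_of_minimal (hact : ∀ x : G, ρ.act x '' (PH : Set H) = PH) {Δ : H}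
    (hΔ : Δ ∈ PH) (hgar : IsGarsideElt (⟨Δ, hΔ⟩ : PH))
    (hmin : ∀ Δ' : PH, IsGarsideElt Δ' → dvdL (⟨Δ, hΔ⟩ : PH) Δ') (y : G) (u : H) :
    ρ.act y u ∈ gLset PH Δ ↔ u ∈ gLset PH Δ := by
  have hle : ∀ w : G, gdvdL PH Δ (ρ.act w Δ) := fun w =>
    (dvdL_iff_gdvdL ⟨Δ, hΔ⟩ (submonoidMulEquiv hact w ⟨Δ, hΔ⟩)).1
      (hmin _ (hgar.map_mulEquiv (submonoidMulEquiv hact w)))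
  have hge : gdvdL PH (ρ.act y⁻¹ Δ) Δ := by
    simpa only [act_inv_act] using (gdvdL_act_act_iff hact y⁻¹ Δ (ρ.act y Δ)).2 (hle y)
  have heq : gLset PH (ρ.act y⁻¹ Δ) = gLset PH Δ :=
    (gLset_subset_of_gdvdL hge).antisymm (gLset_subset_of_gdvdL (hle y⁻¹))
  calc ρ.act y u ∈ gLset PH Δ ↔ ρ.act y u ∈ gLset PH (ρ.act y (ρ.act y⁻¹ Δ)) := by
        rw [act_act_inv]
    _ ↔ u ∈ gLset PH Δ := by rw [act_mem_gLset_act_iff hact, heq]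

end RightAction

namespace SDP

variable {G H : Type*} [Group G] [Group H] {ρ : RightAction G H}

def inG : G →* SDP ρ where
  toFun x := ⟨x, 1⟩
  map_one' := rfl
  map_mul' x y := by
    show SDP.mk (x * y) 1 = SDP.mk (x * y) (ρ.act y 1 * 1)
    rw [ρ.act_one', mul_one]

def inH : H →* SDP ρ where
  toFun u := ⟨1, u⟩
  map_one' := rfl
  map_mul' u v := by
    show SDP.mk 1 (u * v) = SDP.mk (1 * 1) (ρ.act 1 u * v)
    rw [one_mul, ρ.act_one]

def toG : SDP ρ →* G where
  toFun p := p.g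
  map_one' := rfl
  map_mul' _ _ := rfl

@[simp] lemma inG_g (x : G) : (inG x : SDP ρ).g = x := rfl
@[simp] lemma inG_h (x : G) : (inG x : SDP ρ).h = 1 := rfl

lemma inG_mul_inH (p : SDP ρ) : inG p.g * inH p.h = p := by
  show SDP.mk (p.g * 1) (ρ.act 1 1 * p.h) = p
  rw [mul_one, ρ.act_one, one_mul]

lemma inv_mul_g (p q : SDP ρ) : (p⁻¹ * q).g = p.g⁻¹ * q.g := rfl

lemma inv_mul_h (p q : SDP ρ) : (p⁻¹ * q).h = (ρ.act (p.g⁻¹ * q.g) p.h)⁻¹ * q.h := by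
  show ρ.act q.g (ρ.act p.g⁻¹ p.h⁻¹) * q.h = _
  rw [← ρ.act_comp, RightAction.act_inv]

lemma mul_inv_g (p q : SDP ρ) : (q * p⁻¹).g = q.g * p.g⁻¹ := rfl

lemma mul_inv_h (p q : SDP ρ) : (q * p⁻¹).h = ρ.act p.g⁻¹ (q.h * p.h⁻¹) := by
  show ρ.act p.g⁻¹ q.h * ρ.act p.g⁻¹ p.h⁻¹ = _
  rw [ρ.act_mul]

variable {PG : Submonoid G} {PH : Submonoid H} {P : Submonoid (SDP ρ)}

lemma mem_gLset_iff (hP : ∀ p, p ∈ P ↔ SDPpos PG PH p)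
    (hact : ∀ x : G, ρ.act x '' (PH : Set H) = PH) (p q : SDP ρ) :
    p ∈ gLset P q ↔ p.g ∈ gLset PG q.g ∧ ρ.act (p.g⁻¹ * q.g) p.h ∈ gLset PH q.h := by
  simp only [gLset, gdvdL, Set.mem_ofPred_eq, hP, SDPpos, inv_mul_g, inv_mul_h,
    RightAction.act_mem_iff hact]
  tauto

lemma mem_gRset_iff (hP : ∀ p, p ∈ P ↔ SDPpos PG PH p)
    (hact : ∀ x : G, ρ.act x '' (PH : Set H) = PH) (p q : SDP ρ) :
    p ∈ gRset P q ↔ p.g ∈ gRset PG q.g ∧ p.h ∈ gRset PH q.h := by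
  simp only [gRset, gdvdR, Set.mem_ofPred_eq, hP, SDPpos, mul_inv_g, mul_inv_h,
    RightAction.act_mem_iff hact]
  tauto

lemma isGarsideIn_mk (hP : ∀ p, p ∈ P ↔ SDPpos PG PH p)
    (hact : ∀ x : G, ρ.act x '' (PH : Set H) = PH) {ΔG : G} {ΔH : H} (hΔG : ΔG ∈ PG)
    (hΔH : ΔH ∈ PH) (hG : IsGarsideIn PG ΔG) (hH : IsGarsideIn PH ΔH)
    (hstab : ∀ (y : G) (u : H), ρ.act y u ∈ gLset PH ΔH ↔ u ∈ gLset PH ΔH) :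
    IsGarsideIn P (SDP.mk ΔG ΔH) := by
  have hL : ∀ p : SDP ρ, p ∈ gLset P (mk ΔG ΔH) ↔ p.g ∈ gLset PG ΔG ∧ p.h ∈ gLset PH ΔH :=
    fun p => by rw [mem_gLset_iff hP hact, hstab]
  refine ⟨Set.ext fun p => by rw [hL, mem_gRset_iff hP hact, hG.1, hH.1], fun p hp => ?_⟩
  obtain ⟨hpg, hph⟩ := (hP p).1 hp
  rw [← inG_mul_inH p]
  exact mul_mem
    (apply_mem_closure_of_mapsTo inG (fun x hx => (hL _).2 ⟨hx, one_mem_gLset hΔH⟩) (hG.2 hpg))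
    (apply_mem_closure_of_mapsTo inH (fun u hu => (hL _).2 ⟨one_mem_gLset hΔG, hu⟩) (hH.2 hph))

end SDP

namespace IsGarsideIn

open SDP

variable {G H : Type*} [Group G] [Group H] {ρ : RightAction G H}
variable {PG : Submonoid G} {PH : Submonoid H} {P : Submonoid (SDP ρ)} {a : G} {b : H}

lemma sdp_fst (hP : ∀ p, p ∈ P ↔ SDPpos PG PH p)
    (hact : ∀ x : G, ρ.act x '' (PH : Set H) = PH) (hb : b ∈ PH)
    (hD : IsGarsideIn P (mk a b)) : IsGarsideIn PG a := by
  have hL : ∀ x, inG x ∈ gLset P (mk a b) ↔ x ∈ gLset PG a := fun x => by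
    rw [mem_gLset_iff hP hact, inG_g, inG_h, ρ.act_one']
    exact and_iff_left (one_mem_gLset hb)
  have hR : ∀ x, inG x ∈ gRset P (mk a b) ↔ x ∈ gRset PG a := fun x => by
    rw [mem_gRset_iff hP hact, inG_g, inG_h]
    exact and_iff_left (one_mem_gRset hb)
  refine ⟨Set.ext fun x => by rw [← hL, ← hR, hD.1], fun x hx => ?_⟩
  have hmaps : Set.MapsTo (toG : SDP ρ →* G) (gLset P (mk a b)) (gLset PG a) :=
    fun p hp => ((mem_gLset_iff hP hact p _).1 hp).1
  exact apply_mem_closure_of_mapsTo toG hmaps (hD.2 ((hP (inG x)).2 ⟨hx, one_mem PH⟩))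

lemma sdp_snd_gLset_eq (hP : ∀ p, p ∈ P ↔ SDPpos PG PH p)
    (hact : ∀ x : G, ρ.act x '' (PH : Set H) = PH) (ha : a ∈ PG)
    (hD : IsGarsideIn P (mk a b)) : gLset PH b = gRset PH b := by
  ext u
  have key := Set.ext_iff.1 hD.1 (mk a u)
  rw [mem_gLset_iff hP hact, mem_gRset_iff hP hact] at key
  simpa only [inv_mul_cancel, ρ.act_one, self_mem_gLset ha, self_mem_gRset ha, true_and] using key

lemma sdp_act_mem_gLset_iff (hP : ∀ p, p ∈ P ↔ SDPpos PG PH p)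
    (hact : ∀ x : G, ρ.act x '' (PH : Set H) = PH) (ha : a ∈ PG) (hb : b ∈ PH)
    (hD : IsGarsideIn P (mk a b)) {y : G} (hy : y ∈ PG) (u : H) :
    ρ.act y u ∈ gLset PH b ↔ u ∈ gLset PH b := by
  have hA := hD.sdp_fst hP hact hb
  let S : Submonoid G :=
    { carrier := {y | ∀ u, ρ.act y u ∈ gLset PH b ↔ u ∈ gLset PH b}
      one_mem' := fun u => by rw [ρ.act_one]
      mul_mem' := fun {y z} hy hz u => by rw [ρ.act_comp]; exact (hz _).trans (hy u) }
  suffices gLset PG a ⊆ S from closure_le.2 this (hA.2 hy) u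
  intro z hzL v
  obtain ⟨hz, haz⟩ : z ∈ gRset PG a := hA.1 ▸ hzL
  have hx : a * z⁻¹ ∈ gLset PG a :=
    ⟨haz, by rw [gdvdL, mul_inv_rev, inv_inv, inv_mul_cancel_right]; exact hz⟩
  -- the `≤_L`-cofactor of `(a * z⁻¹, v)` in `(a, b)` has first coordinate `z`
  have key := Set.ext_iff.1 hD.1 (mk (a * z⁻¹) v)
  rw [mem_gLset_iff hP hact, mem_gRset_iff hP hact] at key
  simp only [hx, hA.1 ▸ hx, mul_inv_rev, inv_inv, inv_mul_cancel_right, true_and] at key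
  rw [key, hD.sdp_snd_gLset_eq hP hact ha]

lemma sdp_snd (hP : ∀ p, p ∈ P ↔ SDPpos PG PH p)
    (hact : ∀ x : G, ρ.act x '' (PH : Set H) = PH) (ha : a ∈ PG) (hb : b ∈ PH)
    (hD : IsGarsideIn P (mk a b)) : IsGarsideIn PH b := by
  have hstab : ∀ {y : G}, y ∈ PG → ∀ u, ρ.act y u ∈ gLset PH b ↔ u ∈ gLset PH b :=
    hD.sdp_act_mem_gLset_iff hP hact ha hb
  refine ⟨hD.sdp_snd_gLset_eq hP hact ha, fun u hu => ?_⟩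
  let K : Submonoid (SDP ρ) :=
    { carrier := {p | p.g ∈ PG ∧ p.h ∈ closure (gLset PH b)}
      one_mem' := ⟨one_mem _, one_mem _⟩
      mul_mem' := fun {p q} hp hq => ⟨mul_mem hp.1 hq.1, mul_mem
        (apply_mem_closure_of_mapsTo (ρ.toMulEquiv q.g).toMonoidHom
          (fun v hv => (hstab hq.1 v).2 hv) hp.2) hq.2⟩ }
  have hLK : gLset P (mk a b) ⊆ K := fun p hp => by
    obtain ⟨⟨hpg, hz⟩, hh⟩ := (mem_gLset_iff hP hact _ _).1 hp
    exact ⟨hpg, subset_closure ((hstab hz _).1 hh)⟩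
  exact (closure_le.2 hLK (hD.2 ((hP (inH u)).2 ⟨one_mem _, hu⟩))).2

end IsGarsideIn

theorem sdp_minimal_garside_elt_general {G H : Type*} [Group G] [Group H] (ρ : RightAction G H)
    (PG : Submonoid G) (PH : Submonoid H) (ΔG : G) (ΔH : H)
    (hact : ∀ x : G, ρ.act x '' (PH : Set H) = (PH : Set H))
    (hΔG : ΔG ∈ PG) (hΔH : ΔH ∈ PH)
    (hGelt : IsGarsideElt (⟨ΔG, hΔG⟩ : PG))
    (hGmin : ∀ Δ' : PG, IsGarsideElt Δ' →
      dvdL (⟨ΔG, hΔG⟩ : PG) Δ' ∧ dvdR (⟨ΔG, hΔG⟩ : PG) Δ')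
    (hHelt : IsGarsideElt (⟨ΔH, hΔH⟩ : PH))
    (hHmin : ∀ Δ'' : PH, IsGarsideElt Δ'' →
      dvdL (⟨ΔH, hΔH⟩ : PH) Δ'' ∧ dvdR (⟨ΔH, hΔH⟩ : PH) Δ'')
    (P : Submonoid (SDP ρ))
    (hP : ∀ p : SDP ρ, p ∈ P ↔ p.g ∈ PG ∧ p.h ∈ PH) :
    IsGarsideElt (⟨SDP.mk ΔG ΔH, (hP (SDP.mk ΔG ΔH)).mpr ⟨hΔG, hΔH⟩⟩ : P) ∧
    ∀ D' : P, IsGarsideElt D' →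
      dvdL (⟨SDP.mk ΔG ΔH, (hP (SDP.mk ΔG ΔH)).mpr ⟨hΔG, hΔH⟩⟩ : P) D' ∧
      dvdR (⟨SDP.mk ΔG ΔH, (hP (SDP.mk ΔG ΔH)).mpr ⟨hΔG, hΔH⟩⟩ : P) D' := by
  have hstab := RightAction.act_mem_gLset_iff_of_minimal hact hΔH hHelt fun Δ h => (hHmin Δ h).1
  rw [isGarsideElt_mk_iff] at hGelt hHelt
  refine ⟨(isGarsideElt_mk_iff _).2 (SDP.isGarsideIn_mk hP hact hΔG hΔH hGelt hHelt hstab), ?_⟩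
  rintro ⟨⟨a, b⟩, hab⟩ hD
  obtain ⟨ha, hb⟩ := (hP _).1 hab
  rw [isGarsideElt_mk_iff] at hD
  obtain ⟨hGL, hGR⟩ := hGmin ⟨a, ha⟩ ((isGarsideElt_mk_iff ha).2 (hD.sdp_fst hP hact hb))
  obtain ⟨hHL, hHR⟩ := hHmin ⟨b, hb⟩ ((isGarsideElt_mk_iff hb).2 (hD.sdp_snd hP hact ha hb))
  rw [dvdL_iff_gdvdL] at hGL hHL ⊢
  rw [dvdR_iff_gdvdR] at hGR hHR ⊢
  refine ⟨((SDP.mem_gLset_iff hP hact _ _).2 ⟨⟨hΔG, hGL⟩, ?_⟩).2,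
    ((SDP.mem_gRset_iff hP hact _ _).2 ⟨⟨hΔG, hGR⟩, hΔH, hHR⟩).2⟩
  exact (hD.sdp_act_mem_gLset_iff hP hact ha hb hGL ΔH).2 ⟨hΔH, hHL⟩

/-- **Lemma 4.5.** If `Δ_G` and `Δ_H` are the minimal Garside elements of `G⁺` and
`H⁺` respectively, then `(Δ_G, Δ_H)` is the minimal Garside element of `G⁺ ⋉ H⁺`. -/
theorem sdp_minimal_garside_elt {G H : Type*} [Group G] [Group H] (ρ : RightAction G H)
    (PG : Submonoid G) (PH : Submonoid H) (ΔG : G) (ΔH : H)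
    (hG : IsGarsideGroup PG ΔG) (hH : IsGarsideGroup PH ΔH)
    (hact : ∀ x : G, ρ.act x '' (PH : Set H) = (PH : Set H))
    (hΔG : ΔG ∈ PG) (hΔH : ΔH ∈ PH)
    (hGelt : IsGarsideElt (⟨ΔG, hΔG⟩ : PG))
    (hGmin : ∀ Δ' : PG, IsGarsideElt Δ' →
      dvdL (⟨ΔG, hΔG⟩ : PG) Δ' ∧ dvdR (⟨ΔG, hΔG⟩ : PG) Δ')
    (hHelt : IsGarsideElt (⟨ΔH, hΔH⟩ : PH))
    (hHmin : ∀ Δ'' : PH, IsGarsideElt Δ'' →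
      dvdL (⟨ΔH, hΔH⟩ : PH) Δ'' ∧ dvdR (⟨ΔH, hΔH⟩ : PH) Δ'')
    (P : Submonoid (SDP ρ))
    (hP : ∀ p : SDP ρ, p ∈ P ↔ p.g ∈ PG ∧ p.h ∈ PH) :
    IsGarsideElt (⟨SDP.mk ΔG ΔH, (hP (SDP.mk ΔG ΔH)).mpr ⟨hΔG, hΔH⟩⟩ : P) ∧
    ∀ D' : P, IsGarsideElt D' →
      dvdL (⟨SDP.mk ΔG ΔH, (hP (SDP.mk ΔG ΔH)).mpr ⟨hΔG, hΔH⟩⟩ : P) D' ∧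
      dvdR (⟨SDP.mk ΔG ΔH, (hP (SDP.mk ΔG ΔH)).mpr ⟨hΔG, hΔH⟩⟩ : P) D' :=
  sdp_minimal_garside_elt_general ρ PG PH ΔG ΔH hact hΔG hΔH hGelt hGmin hHelt hHmin P hP
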